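/- arXiv:2508.00084 — 3 statements merged into one kernel-verified Lean document; each statement's English description precedes it below -/
import Mathlib

section
/- Over the field ℚ of rational numbers, the family of 4×4 strictly lower triangular matrices T_p with rows (0,0,0,0), (0,0,0,0), (1,1,0,0), (p,1,0,0), where p ranges over the prime natural numbers, gives pairwise non-isomorphic graded algebras A(T_p). In particular, there are infinitely many isomorphism classes of algebras A(T) for 4×4 strictly lower triangular matrices T over ℚ. -/
open MvPolynomial

noncomputable section

variable (F : Type) [Field F]

/-- The defining relations of the nil graded algebra `A(T)`. -/
def relSet {n : ℕ} (T : Matrix (Fin n) (Fin n) F) : Set (MvPolynomial (Fin n) F) :=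
  { p | ∃ i : Fin n,
      p = X i ^ 2 - ∑ j ∈ Finset.univ.filter (fun j => j < i), C (T i j) * X j * X i }

/-- The nil graded algebra `A(T)` associated to a strictly lower triangular matrix `T`. -/
abbrev NTAlg {n : ℕ} (T : Matrix (Fin n) (Fin n) F) : Type :=
  MvPolynomial (Fin n) F ⧸ Ideal.span (relSet F T)

/-- The generators `X i` of `A(T)`. -/
def NTgen {n : ℕ} (T : Matrix (Fin n) (Fin n) F) (i : Fin n) : NTAlg F T :=
  Ideal.Quotient.mk _ (X i)

/-- An algebra isomorphism is degree preserving iff it (and its inverse) maps the span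
of the degree-2 generators into the span of the degree-2 generators. -/
def IsGradedIso {n : ℕ} {T S : Matrix (Fin n) (Fin n) F}
    (e : NTAlg F T ≃ₐ[F] NTAlg F S) : Prop :=
  (∀ j, e (NTgen F T j) ∈ Submodule.span F (Set.range (NTgen F S))) ∧
  (∀ j, e.symm (NTgen F S j) ∈ Submodule.span F (Set.range (NTgen F T)))

/-- `A(T)` and `A(S)` are isomorphic in the category 𝒩𝒯. -/
def NTIso {n : ℕ} (T S : Matrix (Fin n) (Fin n) F) : Prop :=
  ∃ e : NTAlg F T ≃ₐ[F] NTAlg F S, IsGradedIso F e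

/-- A matrix is strictly lower triangular. -/
def SLTM {n : ℕ} (T : Matrix (Fin n) (Fin n) F) : Prop :=
  ∀ i j : Fin n, i ≤ j → T i j = 0

/-- The key system of equations (Theorem `theo-Key-condition`). -/
def KeyEq {n : ℕ} (T S Γ : Matrix (Fin n) (Fin n) F) : Prop :=
  ∀ r i k : Fin n, i < k →
    2 * Γ i r * Γ k r + Γ k r ^ 2 * S k i =
      ∑ j ∈ Finset.univ.filter (fun j => j < r),
        T r j * (Γ k j * Γ k r * S k i + Γ k j * Γ i r + Γ i j * Γ k r)

/-!
A graded isomorphism `A(T) ≅ A(S)` sends `X i` to `∑ j, Γ i j • X j` for an invertible matrix `Γ`,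
and the relations `X i ^ 2 = (∑ j < i, T i j • X j) * X i` of `A(T)` must hold for these images in
`A(S)`. They become polynomial equations in `Γ` after mapping `A(S)` to `NTTrunc S`, an explicit
model of `A(S)` in degrees at most 4 in which the products `X j * X i`, `j < i`, are independent.

For `T_p` and `T_q` the equations for `X 0` and `X 1` make `Γ` block lower triangular with
`Γ 0 0 * Γ 0 1 = Γ 1 0 * Γ 1 1 = 0`. Put `s = (Γ 0 0 + Γ 1 0) * (Γ 0 1 + Γ 1 1)`. The equation for
`X 2` gives `c ^ 2 = s` or `q * c ^ 2 = s` for some `c ≠ 0`, the one for `X 3` gives `d ^ 2 = p * s`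
or `q * d ^ 2 = p * s` for some `d ≠ 0`, and invertibility of `Γ` forces the two alternatives to differ.
Either way `p * q` is a square, which it is not for distinct primes.
-/

section Truncation

variable {R : Type*} [CommRing R] {n : ℕ} (T : Matrix (Fin n) (Fin n) R)

/-- `quadMul T v w j i`, for `j < i`, is the coefficient of `X j * X i` in
`(∑ k, v k • X k) * (∑ k, w k • X k)`, after rewriting `X i ^ 2` by the relation of `A(T)`;
the entries with `¬ j < i` are `0`. -/
def quadMul (v w : Fin n → R) : Fin n → Fin n → R :=
  fun j i => if j < i then v j * w i + v i * w j + T i j * v i * w i else 0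

theorem quadMul_comm (v w : Fin n → R) : quadMul T v w = quadMul T w v := by
  ext j i; simp only [quadMul]; split_ifs <;> ring

theorem quadMul_zero_left (v : Fin n → R) : quadMul T 0 v = 0 := by
  ext j i; simp [quadMul]

theorem quadMul_single_self (i : Fin n) :
    quadMul T (Pi.single i 1) (Pi.single i 1) =
      quadMul T (∑ j ∈ Finset.univ.filter (· < i), T i j • Pi.single j 1) (Pi.single i 1) := by
  ext j k
  simp only [quadMul, Pi.single_apply, mul_ite, mul_one, mul_zero, Finset.sum_apply,
    Pi.smul_apply, smul_eq_mul, Finset.sum_ite_eq, Finset.mem_filter, Finset.mem_univ, true_and]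
  split_ifs <;> subst_vars <;> simp_all [lt_asymm]

def truncMul (x y : R × (Fin n → R) × (Fin n → Fin n → R)) :
    R × (Fin n → R) × (Fin n → Fin n → R) :=
  (x.1 * y.1, x.1 • y.2.1 + y.1 • x.2.1, x.1 • y.2.2 + y.1 • x.2.2 + quadMul T x.2.1 y.2.1)

theorem truncMul_assoc (x y z : R × (Fin n → R) × (Fin n → Fin n → R)) :
    truncMul T (truncMul T x y) z = truncMul T x (truncMul T y z) := by
  ext <;> simp [truncMul, quadMul] <;> (try split_ifs) <;> ring

theorem truncMul_comm (x y : R × (Fin n → R) × (Fin n → Fin n → R)) :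
    truncMul T x y = truncMul T y x := by
  ext <;> simp [truncMul, quadMul_comm T x.2.1] <;> ring

theorem truncMul_one (x : R × (Fin n → R) × (Fin n → Fin n → R)) :
    truncMul T x (1, 0, 0) = x := by
  ext <;> simp [truncMul, quadMul]

theorem truncMul_zero (x : R × (Fin n → R) × (Fin n → Fin n → R)) :
    truncMul T x 0 = 0 := by
  ext <;> simp [truncMul, quadMul]

theorem truncMul_add (x y z : R × (Fin n → R) × (Fin n → Fin n → R)) :
    truncMul T x (y + z) = truncMul T x y + truncMul T x z := by
  ext <;> simp [truncMul, quadMul] <;> (try split_ifs) <;> ring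

theorem add_truncMul (x y z : R × (Fin n → R) × (Fin n → Fin n → R)) :
    truncMul T (x + y) z = truncMul T x z + truncMul T y z := by
  ext <;> simp [truncMul, quadMul] <;> (try split_ifs) <;> ring

theorem smul_truncMul (r : R) (x y : R × (Fin n → R) × (Fin n → Fin n → R)) :
    truncMul T (r • x) y = r • truncMul T x y := by
  ext <;> simp [truncMul, quadMul] <;> (try split_ifs) <;> ring

/-- `A(T)` in degrees 0, 2 and 4, in the coordinates of `quadMul`: the product is `truncMul T`,
which drops everything of degree 6 and more. -/
def NTTrunc (_T : Matrix (Fin n) (Fin n) R) : Type _ := R × (Fin n → R) × (Fin n → Fin n → R)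

namespace NTTrunc

instance : CommRing (NTTrunc T) :=
  { (inferInstance : AddCommGroup (R × (Fin n → R) × (Fin n → Fin n → R))) with
    mul := truncMul T
    one := (1, 0, 0)
    mul_assoc := truncMul_assoc T
    mul_comm := truncMul_comm T
    mul_one := truncMul_one T
    one_mul := fun x => (truncMul_comm T _ x).trans (truncMul_one T x)
    left_distrib := truncMul_add T
    right_distrib := add_truncMul T
    mul_zero := truncMul_zero T
    zero_mul := fun x => (truncMul_comm T _ x).trans (truncMul_zero T x) }

instance : Module R (NTTrunc T) :=
  inferInstanceAs (Module R (R × (Fin n → R) × (Fin n → Fin n → R)))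

instance : Algebra R (NTTrunc T) :=
  Algebra.ofModule (smul_truncMul T) fun r x y => by
    rw [mul_comm, mul_comm x]; exact smul_truncMul T r y x

variable {T}

def ofLin : (Fin n → R) →ₗ[R] NTTrunc T :=
  LinearMap.inr R R _ ∘ₗ LinearMap.inl R _ (Fin n → Fin n → R)

def ofQuad : (Fin n → Fin n → R) →ₗ[R] NTTrunc T :=
  LinearMap.inr R R _ ∘ₗ LinearMap.inr R (Fin n → R) _

theorem ofLin_injective : Function.Injective (ofLin : (Fin n → R) →ₗ[R] NTTrunc T) :=
  fun _ _ h => congrArg (fun x : R × (Fin n → R) × (Fin n → Fin n → R) => x.2.1) h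

theorem ofQuad_injective : Function.Injective (ofQuad : (Fin n → Fin n → R) →ₗ[R] NTTrunc T) :=
  fun _ _ h => congrArg (fun x : R × (Fin n → R) × (Fin n → Fin n → R) => x.2.2) h

theorem ofLin_mul_ofLin (v w : Fin n → R) :
    (ofLin v * ofLin w : NTTrunc T) = ofQuad (quadMul T v w) := by
  show truncMul T (0, v, 0) (0, w, 0) = (0, 0, quadMul T v w)
  simp [truncMul]

end NTTrunc

end Truncation

section Iso

variable {F} {n : ℕ}

theorem NTgen_sq (T : Matrix (Fin n) (Fin n) F) (i : Fin n) :
    NTgen F T i ^ 2 = (∑ j ∈ Finset.univ.filter (· < i), T i j • NTgen F T j) * NTgen F T i := by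
  have h := Ideal.Quotient.eq_zero_iff_mem.mpr
    (Ideal.subset_span ⟨i, rfl⟩ : _ ∈ Ideal.span (relSet F T))
  simp only [map_sub, map_pow, map_sum, map_mul, sub_eq_zero] at h
  rw [NTgen, h, Finset.sum_mul]
  simp only [NTgen, ← MvPolynomial.algebraMap_eq, Ideal.Quotient.mk_algebraMap]
  refine Finset.sum_congr rfl fun j _ => ?_
  rw [← Algebra.smul_def]

namespace NTTrunc

theorem span_relSet_le_ker_aeval (T : Matrix (Fin n) (Fin n) F) :
    Ideal.span (relSet F T) ≤
      RingHom.ker (aeval fun i => (ofLin (Pi.single i 1) : NTTrunc T)) := by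
  rw [Ideal.span_le]
  rintro _ ⟨i, rfl⟩
  simp only [SetLike.mem_coe, RingHom.mem_ker, map_sub, map_pow, map_sum, map_mul, aeval_X, aeval_C]
  simp only [← Algebra.smul_def, ← Finset.sum_mul, ← map_smul, ← map_sum]
  rw [sq, ofLin_mul_ofLin, ofLin_mul_ofLin, ← quadMul_single_self, sub_self]

def lift (T : Matrix (Fin n) (Fin n) F) : NTAlg F T →ₐ[F] NTTrunc T :=
  Ideal.Quotient.liftₐ _ (aeval fun i => ofLin (Pi.single i 1)) fun _ ha =>
    RingHom.mem_ker.mp (span_relSet_le_ker_aeval T ha)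

theorem lift_NTgen (T : Matrix (Fin n) (Fin n) F) (i : Fin n) :
    lift T (NTgen F T i) = ofLin (Pi.single i 1) :=
  aeval_X _ i

theorem lift_sum_smul_NTgen {T : Matrix (Fin n) (Fin n) F} (c : Fin n → F) :
    lift T (∑ j, c j • NTgen F T j) = ofLin c := by
  conv_rhs => rw [← Finset.univ_sum_single c, map_sum]
  rw [map_sum]
  refine Finset.sum_congr rfl fun j _ => ?_
  rw [map_smul, lift_NTgen, ← map_smul, ← Pi.single_smul', smul_eq_mul, mul_one]

end NTTrunc

open NTTrunc in
/-- Row `i` of `Γ` holds the coordinates of the image of `X i`; the relations are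
`KeyEq F T S Γᵀ`, written with `quadMul`. -/
theorem NTIso.exists_matrix {T S : Matrix (Fin n) (Fin n) F} (h : NTIso F T S) :
    ∃ Γ : Matrix (Fin n) (Fin n) F, Γ.det ≠ 0 ∧ ∀ i, quadMul S (Γ i) (Γ i) =
      quadMul S (∑ j ∈ Finset.univ.filter (· < i), T i j • Γ j) (Γ i) := by
  obtain ⟨e, he, he_symm⟩ := h
  choose Γ hΓ using fun i => (Submodule.mem_span_range_iff_exists_fun F).mp (he i)
  choose Δ hΔ using fun i => (Submodule.mem_span_range_iff_exists_fun F).mp (he_symm i)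
  have himage : ∀ i, lift S (e (NTgen F T i)) = ofLin (Γ i) := fun i => by
    rw [← hΓ, lift_sum_smul_NTgen]
  have hinv : Matrix.of Γ * Matrix.of Δ = 1 := by
    funext i
    apply ofLin_injective (T := T)
    calc ofLin ((Matrix.of Γ * Matrix.of Δ) i) = ofLin (∑ j, Γ i j • Δ j) := by
          congr 1; ext k; simp [Matrix.mul_apply, Finset.sum_apply]
      _ = lift T (e.symm (e (NTgen F T i))) := by
          rw [← hΓ, map_sum e.symm, map_sum (lift T), map_sum ofLin]
          simp only [map_smul, ← hΔ, lift_sum_smul_NTgen]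
      _ = ofLin ((1 : Matrix (Fin n) (Fin n) F) i) := by
          rw [e.symm_apply_apply, lift_NTgen]
          congr 1; ext k; simp [Matrix.one_apply, Pi.single_apply, eq_comm]
  refine ⟨Matrix.of Γ, (Matrix.isUnit_det_of_right_inverse hinv).ne_zero,
    fun i => ofQuad_injective (T := S) ?_⟩
  have hrel := congrArg (lift S ∘ e) (NTgen_sq T i)
  simp only [Function.comp_apply, map_pow, map_mul, map_sum, map_smul, himage] at hrel
  simp only [← map_smul, ← map_sum, sq, ofLin_mul_ofLin] at hrel
  exact hrel

end Iso

theorem Matrix.det_fin_four_of_upper_right_eq_zero {R : Type*} [CommRing R]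
    (M : Matrix (Fin 4) (Fin 4) R) (h02 : M 0 2 = 0) (h03 : M 0 3 = 0) (h12 : M 1 2 = 0)
    (h13 : M 1 3 = 0) :
    M.det = (M 0 0 * M 1 1 - M 0 1 * M 1 0) * (M 2 2 * M 3 3 - M 2 3 * M 3 2) := by
  simp [Matrix.det_succ_row_zero, Fin.sum_univ_succ, Fin.succAbove, h02, h03, h12, h13]
  ring

section Tmat

variable {F}

def Tmat (u : F) : Matrix (Fin 4) (Fin 4) F := !![0, 0, 0, 0; 0, 0, 0, 0; 1, 1, 0, 0; u, 1, 0, 0]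

theorem sltm_Tmat (u : F) : SLTM F (Tmat u) := by
  intro i j hij
  fin_cases i <;> fin_cases j <;> simp_all [Tmat]

theorem sum_filter_lt_Tmat (p : F) (v : Matrix (Fin 4) (Fin 4) F) (i : Fin 4) :
    ∑ j ∈ Finset.univ.filter (· < i), Tmat p i j • v j = ![0, 0, v 0 + v 1, p • v 0 + v 1] i := by
  fin_cases i <;> simp [Finset.sum_filter, Fin.sum_univ_four, Tmat]

theorem quadMul_Tmat_self_eq (h2 : (2 : F) ≠ 0) {q : F} {c u : Fin 4 → F} (hu2 : u 2 = 0)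
    (hu3 : u 3 = 0) (h : quadMul (Tmat q) c c = quadMul (Tmat q) u c) :
    2 * (c 0 * c 1) = u 0 * c 1 + u 1 * c 0 ∧ (c 2 ≠ 0 → c 2 ^ 2 = u 0 * u 1) ∧
      (c 3 ≠ 0 → q * c 3 ^ 2 = u 0 * u 1) ∧ c 2 * c 3 = 0 := by
  have h01 := congrFun (congrFun h 0) 1
  have h02 := congrFun (congrFun h 0) 2
  have h03 := congrFun (congrFun h 0) 3
  have h12 := congrFun (congrFun h 1) 2
  have h13 := congrFun (congrFun h 1) 3
  have h23 := congrFun (congrFun h 2) 3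
  simp [quadMul, Tmat, hu2, hu3] at h01 h02 h03 h12 h13 h23
  refine ⟨by linear_combination h01, fun hc2 => ?_, fun hc3 => ?_, ?_⟩
  · have e0 : 2 * c 0 + c 2 = u 0 := mul_left_cancel₀ hc2 (by linear_combination h02)
    have e1 : 2 * c 1 + c 2 = u 1 := mul_left_cancel₀ hc2 (by linear_combination h12)
    linear_combination 2 * h01 + (u 1 - 2 * c 1) * e0 + c 2 * e1
  · have e0 : 2 * c 0 + q * c 3 = u 0 := mul_left_cancel₀ hc3 (by linear_combination h03)
    have e1 : 2 * c 1 + c 3 = u 1 := mul_left_cancel₀ hc3 (by linear_combination h13)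
    linear_combination 2 * h01 + (u 1 - 2 * c 1) * e0 + q * c 3 * e1
  · exact (mul_eq_zero.mp (by linear_combination h23 : 2 * (c 2 * c 3) = 0)).resolve_left h2

theorem quadMul_Tmat_self_eq_zero (h2 : (2 : F) ≠ 0) {q : F} (hq : q ≠ 0) {c : Fin 4 → F}
    (h : quadMul (Tmat q) c c = 0) : c 2 = 0 ∧ c 3 = 0 ∧ c 0 * c 1 = 0 := by
  obtain ⟨h01, h2sq, h3sq, -⟩ :=
    quadMul_Tmat_self_eq h2 (u := 0) rfl rfl (h.trans (quadMul_zero_left _ c).symm)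
  refine ⟨?_, ?_, ?_⟩
  · by_contra hc2; simpa [hc2] using h2sq hc2
  · by_contra hc3; simpa [hc3, hq] using h3sq hc3
  · simpa [h2] using h01

theorem isSquare_mul_of_quadMul_Tmat (h2 : (2 : F) ≠ 0) {p q : F} (hq : q ≠ 0)
    (Γ : Matrix (Fin 4) (Fin 4) F) (hΓ : Γ.det ≠ 0)
    (hrel : ∀ i, quadMul (Tmat q) (Γ i) (Γ i) =
      quadMul (Tmat q) (∑ j ∈ Finset.univ.filter (· < i), Tmat p i j • Γ j) (Γ i)) :
    IsSquare (p * q) := by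
  simp only [sum_filter_lt_Tmat] at hrel
  obtain ⟨a2, a3, a01⟩ :=
    quadMul_Tmat_self_eq_zero h2 hq (by simpa [quadMul_zero_left] using hrel 0)
  obtain ⟨b2, b3, b01⟩ :=
    quadMul_Tmat_self_eq_zero h2 hq (by simpa [quadMul_zero_left] using hrel 1)
  rw [Matrix.det_fin_four_of_upper_right_eq_zero Γ a2 a3 b2 b3, mul_ne_zero_iff] at hΓ
  obtain ⟨-, hD⟩ := hΓ
  obtain ⟨-, c_sq2, c_sq3, c23⟩ := quadMul_Tmat_self_eq h2 (u := Γ 0 + Γ 1)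
    (by simp [a2, b2]) (by simp [a3, b3]) (by simpa using hrel 2)
  obtain ⟨-, d_sq2, d_sq3, d23⟩ := quadMul_Tmat_self_eq h2 (u := p • Γ 0 + Γ 1)
    (by simp [a2, b2]) (by simp [a3, b3]) (by simpa using hrel 3)
  set s := (Γ 0 + Γ 1) 0 * (Γ 0 + Γ 1) 1 with hs_def
  have hps : (p • Γ 0 + Γ 1) 0 * (p • Γ 0 + Γ 1) 1 = p * s := by
    simp only [hs_def, Pi.add_apply, Pi.smul_apply, smul_eq_mul]
    linear_combination (p ^ 2 - p) * a01 + (1 - p) * b01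
  rw [hps] at d_sq2 d_sq3
  by_cases hc2 : Γ 2 2 = 0
  · rw [hc2, zero_mul, zero_sub, neg_ne_zero, mul_ne_zero_iff] at hD
    obtain ⟨hc3, hd2⟩ := hD
    refine ⟨Γ 3 2 / Γ 2 3, ?_⟩
    field_simp
    linear_combination p * c_sq3 hc3 - d_sq2 hd2
  · have hc3 : Γ 2 3 = 0 := (mul_eq_zero.mp c23).resolve_left hc2
    rw [hc3, zero_mul, sub_zero, mul_ne_zero_iff] at hD
    have hd2 : Γ 3 2 = 0 := (mul_eq_zero.mp d23).resolve_right hD.2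
    refine ⟨q * Γ 3 3 / Γ 2 2, ?_⟩
    field_simp
    linear_combination p * c_sq2 hc2 - d_sq3 hD.2

theorem NTIso.isSquare_mul_Tmat (h2 : (2 : F) ≠ 0) {p q : F} (hq : q ≠ 0)
    (h : NTIso F (Tmat p) (Tmat q)) : IsSquare (p * q) :=
  let ⟨Γ, hΓ, hrel⟩ := h.exists_matrix
  isSquare_mul_of_quadMul_Tmat h2 hq Γ hΓ hrel

end Tmat

theorem Nat.Prime.not_isSquare_mul {p q : ℕ} (hp : p.Prime) (hq : q.Prime) (hne : p ≠ q) :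
    ¬ IsSquare (p * q) := by
  rintro ⟨k, hk⟩
  obtain ⟨m, rfl⟩ : p ∣ k := hp.dvd_of_dvd_pow (n := 2) ⟨q, by rw [sq, ← hk]⟩
  have hpq : p ∣ q := ⟨m * m, Nat.eq_of_mul_eq_mul_left hp.pos (by rw [hk]; ring)⟩
  exact hne ((Nat.prime_dvd_prime_iff_eq hp hq).mp hpq)

/-- Over `ℚ`, the matrices `T_p` for distinct primes `p` give pairwise
non-isomorphic graded algebras; in particular there are infinitely many
isomorphism classes of the algebras `A(T)` for `T` a `4×4` SLTM over `ℚ`. -/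
theorem stmt3 :
    (∀ p q : ℕ, p.Prime → q.Prime → p ≠ q →
      ¬ NTIso ℚ
          !![(0:ℚ),0,0,0; 0,0,0,0; 1,1,0,0; (p:ℚ),1,0,0]
          !![(0:ℚ),0,0,0; 0,0,0,0; 1,1,0,0; (q:ℚ),1,0,0]) ∧
    (∀ N : ℕ, ∃ f : Fin N → Matrix (Fin 4) (Fin 4) ℚ,
      (∀ x, SLTM ℚ (f x)) ∧ ∀ x y, x ≠ y → ¬ NTIso ℚ (f x) (f y)) := by
  have key : ∀ p q : ℕ, p.Prime → q.Prime → p ≠ q →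
      ¬ NTIso ℚ (Tmat (p : ℚ)) (Tmat (q : ℚ)) := by
    intro p q hp hq hne h
    apply hp.not_isSquare_mul hq hne
    rw [← Rat.isSquare_natCast_iff, Nat.cast_mul]
    exact h.isSquare_mul_Tmat two_ne_zero (Nat.cast_ne_zero.mpr hq.ne_zero)
  refine ⟨key, fun N => ⟨fun x => Tmat (Nat.nth Nat.Prime x : ℚ), fun x => sltm_Tmat _,
    fun x y hxy => key _ _ (Nat.prime_nth_prime x) (Nat.prime_nth_prime y) fun h => ?_⟩⟩
  exact hxy (Fin.val_injective (Nat.nth_injective Nat.infinite_setOfPred_prime h))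
end
end

section
/- Let F be a field of characteristic ≠ 2 and u, v ∈ F \ {0} with u/v = ε² for some ε ∈ F. Then the 4×4 matrix Γ with rows (1, 0, 0, (u − vε)/2), (0, 1, 0, (1 − ε)/2), (0, 0, 1, 0), (0, 0, 0, ε) satisfies, for all 1 ≤ r ≤ 4 and 1 ≤ i < k ≤ 4, the equation 2γ_{ir}γ_{kr} + γ_{kr}² s_{ki} = ∑_{j<r} t_{rj}(γ_{kj}γ_{kr} s_{ki} + γ_{kj}γ_{ir} + γ_{ij}γ_{kr}), where T has rows (0,0,0,0), (0,0,0,0), (1,1,0,0), (u,1,0,0) and S has rows (0,0,0,0), (0,0,0,0), (1,1,0,0), (v,1,0,0). Hence Γ defines a graded isomorphism A(T) → A(S). -/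
/-!
Modulo the relations `x_k ^ 2 = ∑_{i<k} s_{ki} x_i x_k` of `A(S)`, the product of two linear forms
in the generators reduces to a combination of the monomials `x_i x_k` with `i < k`. Comparing the
coefficients of these monomials in the image of the `r`-th relation of `A(T)` under
`X_j ↦ ∑_i γ_{ij} X_i` gives exactly the key system, so it yields an algebra map `A(T) → A(S)`
that is linear on the generators. For the explicit `Γ`, the key system is a direct computation
using `u = v ε ^ 2`, and its inverse matrix is the same construction for `(v, u, ε⁻¹)`, which
satisfies the system for the swapped pair because `v = u ε⁻²`; the two maps are mutually inverse.
-/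

open MvPolynomial

noncomputable section

variable (F : Type) [Field F]

variable {F}

open Finset

def SatisfiesNTRel {R A ι : Type*} [CommSemiring R] [CommSemiring A] [Algebra R A] [Fintype ι]
    [LinearOrder ι] (S : Matrix ι ι R) (x : ι → A) : Prop :=
  ∀ k, x k ^ 2 = ∑ i ∈ univ.filter (· < k), S k i • (x i * x k)

theorem SatisfiesNTRel.sum_smul_mul_sum_smul {R A ι : Type*} [CommSemiring R] [CommSemiring A]
    [Algebra R A] [Fintype ι] [LinearOrder ι] {S : Matrix ι ι R} {x : ι → A}
    (hx : SatisfiesNTRel S x) (a b : ι → R) :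
    (∑ i, a i • x i) * (∑ k, b k • x k) =
      ∑ k, ∑ i ∈ univ.filter (· < k), (a i * b k + a k * b i + a k * b k * S k i) • (x i * x k) := by
  have split (i k : ι) : (a i • x i) * (b k • x k) =
      (if i < k then (a i * b k) • (x i * x k) else 0) + (if i = k then (a k * b k) • x k ^ 2 else 0)
        + (if k < i then (a i * b k) • (x k * x i) else 0) := by
    rw [smul_mul_smul_comm]
    rcases lt_trichotomy i k with h | rfl | h
    · simp [h, h.ne, h.not_gt]
    · simp [sq]
    · simp [h, h.ne', h.not_gt, mul_comm (x i)]
  simp only [sum_mul_sum, split, sum_add_distrib, sum_ite_eq, mem_univ, if_true, hx _, smul_sum,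
    smul_smul, add_smul]
  rw [sum_comm (f := fun i k => if i < k then _ else _)]
  simp only [← sum_filter]
  exact add_right_comm _ _ _

section Substitution

variable {n : ℕ} {T S Γ : Matrix (Fin n) (Fin n) F}

theorem KeyEq.satisfiesNTRel (h : KeyEq F T S Γ) {A : Type*} [CommRing A] [Algebra F A]
    {x : Fin n → A} (hx : SatisfiesNTRel S x) :
    SatisfiesNTRel T fun r => ∑ i, Γ i r • x i := by
  intro r
  simp only [sq, hx.sum_smul_mul_sum_smul, smul_sum, smul_smul]
  rw [sum_comm]
  refine sum_congr rfl fun k _ => ?_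
  rw [sum_comm]
  simp only [← sum_smul]
  refine sum_congr rfl fun i hi => congrArg (· • (x i * x k)) ?_
  convert h r i k (mem_filter.1 hi).2 using 1
  · ring
  · exact sum_congr rfl fun j _ => by ring

theorem satisfiesNTRel_NTgen (S : Matrix (Fin n) (Fin n) F) : SatisfiesNTRel S (NTgen F S) := by
  intro k
  have hrel : Ideal.Quotient.mk (Ideal.span (relSet F S))
      (X k ^ 2 - ∑ j ∈ univ.filter (fun j => j < k), C (S k j) * X j * X k) = 0 :=
    Ideal.Quotient.eq_zero_iff_mem.2 (Ideal.subset_span ⟨k, rfl⟩)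
  simp only [map_sub, map_pow, map_sum, map_mul, sub_eq_zero] at hrel
  simp only [NTgen, hrel, mul_assoc]
  refine sum_congr rfl fun i _ => ?_
  rw [← MvPolynomial.algebraMap_eq, Ideal.Quotient.mk_algebraMap, ← Algebra.smul_def]

namespace KeyEq

def algHom (h : KeyEq F T S Γ) : NTAlg F T →ₐ[F] NTAlg F S :=
  Ideal.Quotient.liftₐ _ (aeval fun j => ∑ i, Γ i j • NTgen F S i) fun a ha => by
    refine (Ideal.span_le (I := RingHom.ker (aeval fun j => ∑ i, Γ i j • NTgen F S i :
      MvPolynomial (Fin n) F →ₐ[F] NTAlg F S))).2 ?_ ha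
    rintro _ ⟨r, rfl⟩
    simp only [SetLike.mem_coe, RingHom.mem_ker, map_sub, map_pow, map_sum, map_mul, aeval_X,
      aeval_C, sub_eq_zero]
    rw [h.satisfiesNTRel (satisfiesNTRel_NTgen S) r]
    exact sum_congr rfl fun j _ => by rw [Algebra.smul_def, mul_assoc]

theorem algHom_NTgen (h : KeyEq F T S Γ) (j : Fin n) :
    h.algHom (NTgen F T j) = ∑ i, Γ i j • NTgen F S i :=
  aeval_X _ j

theorem algHom_NTgen_mem_span (h : KeyEq F T S Γ) (j : Fin n) :
    h.algHom (NTgen F T j) ∈ Submodule.span F (Set.range (NTgen F S)) := by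
  rw [algHom_NTgen]
  exact Submodule.sum_mem _ fun i _ => Submodule.smul_mem _ _ (Submodule.subset_span ⟨i, rfl⟩)

theorem algHom_comp_algHom {Δ : Matrix (Fin n) (Fin n) F} (hΓ : KeyEq F T S Γ)
    (hΔ : KeyEq F S T Δ) (hΔΓ : Δ * Γ = 1) : hΔ.algHom.comp hΓ.algHom = AlgHom.id F _ := by
  refine Ideal.Quotient.algHom_ext _ (MvPolynomial.algHom_ext fun j => ?_)
  change hΔ.algHom (hΓ.algHom (NTgen F T j)) = NTgen F T j
  simp only [algHom_NTgen, map_sum, map_smul, smul_sum, smul_smul]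
  rw [sum_comm]
  simp only [← sum_smul, mul_comm (Γ _ j), ← Matrix.mul_apply, hΔΓ, Matrix.one_apply, ite_smul,
    one_smul, zero_smul, sum_ite_eq', mem_univ, if_true]

def algEquiv {Δ : Matrix (Fin n) (Fin n) F} (hΓ : KeyEq F T S Γ) (hΔ : KeyEq F S T Δ)
    (hΓΔ : Γ * Δ = 1) : NTAlg F T ≃ₐ[F] NTAlg F S :=
  AlgEquiv.ofAlgHom hΓ.algHom hΔ.algHom (algHom_comp_algHom hΔ hΓ hΓΔ)
    (algHom_comp_algHom hΓ hΔ (mul_eq_one_comm.1 hΓΔ))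

theorem algEquiv_NTgen {Δ : Matrix (Fin n) (Fin n) F} (hΓ : KeyEq F T S Γ) (hΔ : KeyEq F S T Δ)
    (hΓΔ : Γ * Δ = 1) (j : Fin n) :
    algEquiv hΓ hΔ hΓΔ (NTgen F T j) = ∑ i, Γ i j • NTgen F S i :=
  hΓ.algHom_NTgen j

theorem isGradedIso_algEquiv {Δ : Matrix (Fin n) (Fin n) F} (hΓ : KeyEq F T S Γ)
    (hΔ : KeyEq F S T Δ) (hΓΔ : Γ * Δ = 1) : IsGradedIso F (algEquiv hΓ hΔ hΓΔ) :=
  ⟨hΓ.algHom_NTgen_mem_span, hΔ.algHom_NTgen_mem_span⟩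

end KeyEq

end Substitution

def matT (w : F) : Matrix (Fin 4) (Fin 4) F :=
  !![0, 0, 0, 0; 0, 0, 0, 0; 1, 1, 0, 0; w, 1, 0, 0]

def matΓ (w w' ε : F) : Matrix (Fin 4) (Fin 4) F :=
  !![1, 0, 0, (w - w' * ε) / 2; 0, 1, 0, (1 - ε) / 2; 0, 0, 1, 0; 0, 0, 0, ε]

theorem keyEq_matΓ (h2 : (2 : F) ≠ 0) {w w' ε : F} (hw : w = w' * ε ^ 2) :
    KeyEq F (matT w) (matT w') (matΓ w w' ε) := by
  subst hw
  intro r i k hik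
  fin_cases r <;> fin_cases i <;> fin_cases k <;>
    simp [matT, matΓ, sum_filter, Fin.sum_univ_four] at hik ⊢ <;>
    field_simp <;> ring

theorem matΓ_mul_matΓ_inv {w w' ε : F} (hε : ε ≠ 0) : matΓ w w' ε * matΓ w' w ε⁻¹ = 1 := by
  ext i j
  fin_cases i <;> fin_cases j <;> simp [matΓ, Matrix.mul_apply, Fin.sum_univ_four] <;>
    field_simp <;> ring

/-- The explicit matrix `Γ` satisfies the key equations and hence defines a graded
isomorphism `A(T) → A(S)`, where the last rows of `T`, `S` are `(u,1,0,0)`, `(v,1,0,0)`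
and `u/v = ε²`. -/
theorem stmt12 (h2 : (2 : F) ≠ 0) (u v ε : F) (hu : u ≠ 0) (hv : v ≠ 0)
    (hε : u / v = ε ^ 2) :
    KeyEq F
        !![(0:F),0,0,0; 0,0,0,0; 1,1,0,0; u,1,0,0]
        !![(0:F),0,0,0; 0,0,0,0; 1,1,0,0; v,1,0,0]
        !![(1:F), 0, 0, (u - v*ε)/2; 0, 1, 0, (1-ε)/2; 0, 0, 1, 0; 0, 0, 0, ε] ∧
    ∃ e : NTAlg F !![(0:F),0,0,0; 0,0,0,0; 1,1,0,0; u,1,0,0] ≃ₐ[F]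
          NTAlg F !![(0:F),0,0,0; 0,0,0,0; 1,1,0,0; v,1,0,0],
      (∀ j : Fin 4, e (NTgen F !![(0:F),0,0,0; 0,0,0,0; 1,1,0,0; u,1,0,0] j) =
        ∑ i : Fin 4,
          !![(1:F), 0, 0, (u - v*ε)/2; 0, 1, 0, (1-ε)/2; 0, 0, 1, 0; 0, 0, 0, ε] i j •
            NTgen F !![(0:F),0,0,0; 0,0,0,0; 1,1,0,0; v,1,0,0] i) ∧
      IsGradedIso F e := by
  have huv : u = v * ε ^ 2 := by rw [← hε, mul_div_cancel₀ u hv]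
  have hε0 : ε ≠ 0 := by rintro rfl; simp_all
  have hvu : v = u * ε⁻¹ ^ 2 := by rw [huv, inv_pow, mul_inv_cancel_right₀ (pow_ne_zero 2 hε0)]
  have hΓ : KeyEq F (matT u) (matT v) (matΓ u v ε) := keyEq_matΓ h2 huv
  have hΔ : KeyEq F (matT v) (matT u) (matΓ v u ε⁻¹) := keyEq_matΓ h2 hvu
  have hΓΔ := matΓ_mul_matΓ_inv (w := u) (w' := v) hε0
  exact ⟨hΓ, KeyEq.algEquiv hΓ hΔ hΓΔ, KeyEq.algEquiv_NTgen hΓ hΔ hΓΔ,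
    KeyEq.isGradedIso_algEquiv hΓ hΔ hΓΔ⟩
end
end

section
/- Let F be a field of characteristic ≠ 2, and let U ≠ 0 be a strictly lower triangular n×n matrix. Then A(U) ≅ A(0_n) as graded algebras if and only if either (i) every nonzero row of U has its last nonzero entry (leader) in the first column, or (ii) for every position (r,c) with c > 1 and u_{rc} ≠ 0 we have 2 u_{ri} + u_{rc} u_{ci} = 0 for all 1 ≤ i < c. -/
open MvPolynomial

noncomputable section

variable (F : Type) [Field F]

/-- `(r,c)` is the leader position of row `r`: the last nonzero entry of the row. -/
def IsLeader {n : ℕ} (T : Matrix (Fin n) (Fin n) F) (r c : Fin n) : Prop :=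
  T r c ≠ 0 ∧ ∀ j, c < j → T r j = 0

/-!
Write `ℓ_r = ∑_j u_{rj} X_j` and `W_r = X_r - ℓ_r / 2` (the rows of `completeSquare U`), so that
the defining relation of `A(U)` reads `W_r² = ℓ_r² / 4`. Condition (ii) says exactly that
`ℓ_r = u_{rc} W_c` for the leader `c` of row `r`; then `W_r² = 0` in `A(U)` by induction on `r`,
and the unitriangular substitution `X ↦ W` is a graded isomorphism `A(0_n) ≅ A(U)`.

Conversely, a graded isomorphism yields a basis of square-zero linear forms of `A(U)`. Mapping
`A(U)` to the dual numbers over the dual numbers shows that a square-zero linear form whose last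
nonzero coordinate is `d_t` equals `d_t W_t`; as these forms span, every `W_t` squares to zero,
and the coefficient relations this imposes are condition (ii). Condition (i) implies (ii)
vacuously.
-/

theorem exists_last_ne_zero {ι M : Type*} [Fintype ι] [LinearOrder ι] [Zero M] {f : ι → M}
    {a : ι} (ha : f a ≠ 0) : ∃ c, a ≤ c ∧ f c ≠ 0 ∧ ∀ j, c < j → f j = 0 := by
  classical
  obtain ⟨c, hc, hmax⟩ :=
    (Finset.univ.filter fun j => f j ≠ 0).exists_max_image id ⟨a, by simpa using ha⟩
  refine ⟨c, hmax a (by simpa using ha), (Finset.mem_filter.mp hc).2, fun j hcj => ?_⟩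
  by_contra hj
  exact (hmax j (by simpa using hj)).not_gt hcj

theorem Finset.eq_univ_of_span_image_eq_top {R V ι : Type*} [Ring R] [StrongRankCondition R]
    [AddCommGroup V] [Module R V] [Fintype ι] (hcard : Fintype.card ι ≤ Module.finrank R V)
    (b : ι → V) {s : Finset ι} (hs : Submodule.span R (b '' s) = ⊤) : s = Finset.univ := by
  classical
  refine s.eq_univ_of_card (le_antisymm s.card_le_univ ?_)
  calc Fintype.card ι ≤ Module.finrank R V := hcard
    _ = Module.finrank R (Submodule.span R ((s.image b : Finset V) : Set V)) := by
      rw [Finset.coe_image, hs, finrank_top]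
    _ ≤ (s.image b).card := finrank_span_finset_le_card _
    _ ≤ s.card := Finset.card_image_le

section

variable {F} {n : ℕ}

def completeSquare (U : Matrix (Fin n) (Fin n) F) : Matrix (Fin n) (Fin n) F :=
  1 - (2⁻¹ : F) • U

theorem det_completeSquare {U : Matrix (Fin n) (Fin n) F} (hU : SLTM F U) :
    (completeSquare U).det = 1 := by
  rw [Matrix.det_of_isLowerTriangular _ fun i j hij => ?_]
  · simp [completeSquare, hU _ _ le_rfl]
  · have hij : i < j := hij
    simp [completeSquare, Matrix.one_apply_ne hij.ne, hU i j hij.le]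

/-- Condition (ii) of the theorem. -/
def HalfRowCondition (U : Matrix (Fin n) (Fin n) F) : Prop :=
  ∀ r c : Fin n, 0 < (c : ℕ) → U r c ≠ 0 → ∀ i : Fin n, i < c → 2 * U r i + U r c * U c i = 0

theorem halfRowCondition_of_forall_isLeader {U : Matrix (Fin n) (Fin n) F}
    (h : ∀ r c : Fin n, IsLeader F U r c → (c : ℕ) = 0) : HalfRowCondition U := by
  intro r c hc hrc _ _
  obtain ⟨c', hcc', hc', hlast⟩ := exists_last_ne_zero hrc
  have hc'0 := h r c' ⟨hc', hlast⟩
  exact absurd (Fin.le_def.mp hcc') (by omega)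

theorem row_eq_smul_completeSquare_row (h2 : (2 : F) ≠ 0) {U : Matrix (Fin n) (Fin n) F}
    (hU : SLTM F U) (hcond : HalfRowCondition U) {r c : Fin n} (hlead : IsLeader F U r c) :
    U r = U r c • completeSquare U c := by
  ext j
  rcases lt_trichotomy j c with hj | rfl | hj
  · have h := hcond r c (Nat.lt_of_le_of_lt (Nat.zero_le _) hj) hlead.1 j hj
    simp [completeSquare, hj.ne']
    field_simp
    linear_combination h
  · simp [completeSquare, hU j j le_rfl]
  · simp [completeSquare, Matrix.one_apply_ne hj.ne, hlead.2 j hj, hU c j hj.le]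

section LinSubst

variable {A : Type*} [CommRing A] [Algebra F A]

def linSubst (M : Matrix (Fin n) (Fin n) F) (y : Fin n → A) : Fin n → A :=
  fun i => ∑ j, M i j • y j

theorem linSubst_linSubst (M N : Matrix (Fin n) (Fin n) F) (y : Fin n → A) :
    linSubst M (linSubst N y) = linSubst (M * N) y := by
  ext i
  simp only [linSubst, Matrix.mul_apply, Finset.smul_sum, Finset.sum_smul, smul_smul]
  exact Finset.sum_comm

theorem linSubst_one (y : Fin n → A) : linSubst (1 : Matrix (Fin n) (Fin n) F) y = y := by
  ext i
  simp [linSubst, Matrix.one_apply]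

theorem map_linSubst {B : Type*} [CommRing B] [Algebra F B] (f : A →ₐ[F] B)
    (M : Matrix (Fin n) (Fin n) F) (y : Fin n → A) (i : Fin n) :
    f (linSubst M y i) = linSubst M (f ∘ y) i := by
  simp [linSubst]

theorem linSubst_mem_span (M : Matrix (Fin n) (Fin n) F) (y : Fin n → A) (i : Fin n) :
    linSubst M y i ∈ Submodule.span F (Set.range y) :=
  Submodule.sum_mem _ fun j _ => Submodule.smul_mem _ _ (Submodule.subset_span ⟨j, rfl⟩)

theorem sum_filter_lt_eq_linSubst_mul {U : Matrix (Fin n) (Fin n) F} (hU : SLTM F U)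
    (y : Fin n → A) (i : Fin n) :
    ∑ j ∈ Finset.univ.filter (fun j => j < i), algebraMap F A (U i j) * y j * y i =
      linSubst U y i * y i := by
  rw [← Finset.sum_mul, Finset.sum_filter, linSubst]
  congr 1
  refine Finset.sum_congr rfl fun j _ => ?_
  split_ifs with hji
  · rw [Algebra.smul_def]
  · rw [hU i j (not_lt.mp hji), zero_smul]

theorem sq_sub_linSubst_mul_eq (h2 : (2 : F) ≠ 0) (U : Matrix (Fin n) (Fin n) F)
    (y : Fin n → A) (i : Fin n) :
    y i ^ 2 - linSubst U y i * y i =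
      linSubst (completeSquare U) y i ^ 2 - ((2⁻¹ : F) • linSubst U y i) ^ 2 := by
  have hP : linSubst (completeSquare U) y i = y i - (2⁻¹ : F) • linSubst U y i := by
    simp [linSubst, completeSquare, sub_smul, Finset.sum_sub_distrib, Matrix.one_apply,
      Finset.smul_sum, smul_smul]
  have hhalf : algebraMap F A 2⁻¹ * 2 = 1 := by
    rw [← map_ofNat (algebraMap F A) 2, ← map_mul, inv_mul_cancel₀ h2, map_one]
  rw [hP, Algebra.smul_def]
  linear_combination (linSubst U y i * y i) * hhalf

theorem sq_linSubst_eq_zero (h2 : (2 : F) ≠ 0) {U : Matrix (Fin n) (Fin n) F} (hU : SLTM F U)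
    (hcond : HalfRowCondition U) {y : Fin n → A} {i : Fin n}
    (hy : ∀ c, c < i → linSubst (completeSquare U) y c ^ 2 = 0) :
    linSubst U y i ^ 2 = 0 := by
  by_cases hrow : ∃ j, U i j ≠ 0
  · obtain ⟨j, hj⟩ := hrow
    obtain ⟨c, -, hc, hlast⟩ := exists_last_ne_zero hj
    have hci : c < i := lt_of_not_ge fun h => hc (hU i c h)
    have hrow_eq : linSubst U y i = U i c • linSubst (completeSquare U) y c := by
      unfold linSubst
      conv_lhs => rw [row_eq_smul_completeSquare_row h2 hU hcond ⟨hc, hlast⟩]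
      simp only [Pi.smul_apply, smul_eq_mul, mul_smul, Finset.smul_sum]
    rw [hrow_eq, smul_pow, hy c hci, smul_zero]
  · simp only [not_exists, not_not] at hrow
    simp [linSubst, hrow]

end LinSubst

namespace NTAlg

variable {A : Type*} [CommRing A] [Algebra F A]

theorem NTgen_sq (T : Matrix (Fin n) (Fin n) F) (i : Fin n) :
    NTgen F T i ^ 2 = ∑ j ∈ Finset.univ.filter (fun j => j < i),
      algebraMap F (NTAlg F T) (T i j) * NTgen F T j * NTgen F T i := by
  let π := Ideal.Quotient.mkₐ F (Ideal.span (relSet F T))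
  have hrel : π (X i ^ 2 - ∑ j ∈ Finset.univ.filter (fun j => j < i), T i j • X j * X i) = 0 := by
    rw [Ideal.Quotient.mkₐ_eq_mk, Ideal.Quotient.eq_zero_iff_mem]
    exact Ideal.subset_span ⟨i, by simp only [smul_eq_C_mul]⟩
  simp only [map_sub, sub_eq_zero, map_pow, map_sum, map_mul, Algebra.smul_def] at hrel
  exact hrel

theorem NTgen_zero_sq (i : Fin n) : NTgen F (0 : Matrix (Fin n) (Fin n) F) i ^ 2 = 0 := by
  simp [NTgen_sq]

def lift (T : Matrix (Fin n) (Fin n) F) (v : Fin n → A)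
    (hv : ∀ i, v i ^ 2 =
      ∑ j ∈ Finset.univ.filter (fun j => j < i), algebraMap F A (T i j) * v j * v i) :
    NTAlg F T →ₐ[F] A :=
  Ideal.Quotient.liftₐ _ (aeval v) fun _ hp => RingHom.mem_ker.mp <| by
    refine (Ideal.span_le.mpr ?_ : Ideal.span (relSet F T) ≤ RingHom.ker (aeval v)) hp
    rintro _ ⟨i, rfl⟩
    simp [hv i]

@[simp]
theorem lift_NTgen (T : Matrix (Fin n) (Fin n) F) (v : Fin n → A) hv (i : Fin n) :
    lift T v hv (NTgen F T i) = v i :=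
  aeval_X v i

theorem algHom_ext {T : Matrix (Fin n) (Fin n) F} {f g : NTAlg F T →ₐ[F] A}
    (h : ∀ i, f (NTgen F T i) = g (NTgen F T i)) : f = g :=
  Ideal.Quotient.algHom_ext F (MvPolynomial.algHom_ext h)

theorem linearIndependent_NTgen (T : Matrix (Fin n) (Fin n) F) :
    LinearIndependent F (NTgen F T) := by
  classical
  refine Fintype.linearIndependent_iff.mpr fun d hd i => ?_
  let v : Fin n → DualNumber F := Pi.single i DualNumber.eps
  have hmul : ∀ a b, v a * v b = 0 := by
    intro a b
    simp only [v, Pi.single_apply]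
    split_ifs <;> simp
  have := congrArg (lift T v fun k => by simp [sq, mul_assoc, hmul]) hd
  have heps : (DualNumber.eps : DualNumber F) ≠ 0 := fun h =>
    one_ne_zero (congrArg TrivSqZeroExt.snd h)
  simpa [v, map_sum, Pi.single_apply, heps] using this

def linearForm (T : Matrix (Fin n) (Fin n) F) : (Fin n → F) →ₗ[F] NTAlg F T :=
  Fintype.linearCombination F (NTgen F T)

theorem linearForm_apply (T : Matrix (Fin n) (Fin n) F) (d : Fin n → F) :
    linearForm T d = ∑ a, d a • NTgen F T a :=
  Fintype.linearCombination_apply F _ d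

theorem lift_linearForm (T : Matrix (Fin n) (Fin n) F) (v : Fin n → A) hv (d : Fin n → F) :
    lift T v hv (linearForm T d) = ∑ a, algebraMap F A (d a) * v a := by
  simp [linearForm_apply, Algebra.smul_def]

/-- The homomorphism `X_j ↦ 2 ε₁`, `X_k ↦ t_{kj} ε₁ + ε₂`, `X_i ↦ 0` otherwise, respects the
relations, and reads off `2 (2 d_j + t_{kj} d_k) d_k` as the `ε₁ ε₂`-coefficient of the
image of the square. -/
theorem two_mul_add_mul_mul_eq_zero_of_square_zero_pair {R : Type*} [CommRing R] [Algebra F R]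
    {ε₁ ε₂ : R} (h11 : ε₁ * ε₁ = 0) (h22 : ε₂ * ε₂ = 0) (h12 : ε₁ * ε₂ ≠ 0) (h2 : (2 : F) ≠ 0)
    {T : Matrix (Fin n) (Fin n) F} {d : Fin n → F} (hd : linearForm T d ^ 2 = 0)
    {j k : Fin n} (hjk : j < k) : (2 * d j + T k j * d k) * d k = 0 := by
  classical
  let v : Fin n → R := Pi.single j (2 * ε₁) + Pi.single k (algebraMap F R (T k j) * ε₁ + ε₂)
  have hv_j : v j = 2 * ε₁ := by simp [v, hjk.ne]
  have hv_k : v k = algebraMap F R (T k j) * ε₁ + ε₂ := by simp [v, hjk.ne']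
  have hv_ne : ∀ l, l ≠ j → l ≠ k → v l = 0 := fun l hlj hlk => by simp [v, hlj, hlk]
  have hv : ∀ i, v i ^ 2 =
      ∑ l ∈ Finset.univ.filter (fun l => l < i), algebraMap F R (T i l) * v l * v i := by
    intro i
    rw [← Finset.sum_mul]
    by_cases hij : i = j
    · subst hij
      rw [Finset.sum_eq_zero fun l hl => ?_, hv_j]
      · linear_combination 4 * h11
      · have hli : l < i := (Finset.mem_filter.mp hl).2
        rw [hv_ne l hli.ne (hli.trans hjk).ne, mul_zero]
    by_cases hik : i = k
    · subst hik
      rw [Finset.sum_eq_single_of_mem j (by simpa using hjk) fun l hl hlj => ?_, hv_j, hv_k]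
      · linear_combination (-(algebraMap F R (T i j)) ^ 2) * h11 + h22
      · rw [hv_ne l hlj (Finset.mem_filter.mp hl).2.ne, mul_zero]
    · rw [hv_ne i hij hik]
      ring
  have himage := congrArg (lift T v hv) hd
  have hsingle : ∀ (l : Fin n) (y : R),
      ∑ x, algebraMap F R (d x) * (Pi.single l y : Fin n → R) x = algebraMap F R (d l) * y :=
    fun l y => by simp [Pi.single_apply]
  simp only [map_pow, lift_linearForm, map_zero, v, Pi.add_apply, mul_add, Finset.sum_add_distrib,
    hsingle] at himage
  have hprod : (2 * (2 * d j + T k j * d k) * d k) • (ε₁ * ε₂) = 0 := by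
    simp only [Algebra.smul_def, map_mul, map_add, map_ofNat]
    linear_combination himage
      - (algebraMap F R (d j) * 2 + algebraMap F R (d k) * algebraMap F R (T k j)) ^ 2 * h11
      - (algebraMap F R (d k)) ^ 2 * h22
  rcases smul_eq_zero.mp hprod with h | h
  · simpa [h2, mul_assoc] using h
  · exact absurd h h12

theorem two_mul_add_mul_mul_eq_zero (h2 : (2 : F) ≠ 0) {T : Matrix (Fin n) (Fin n) F}
    {d : Fin n → F} (hd : linearForm T d ^ 2 = 0) {j k : Fin n} (hjk : j < k) :
    (2 * d j + T k j * d k) * d k = 0 := by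
  refine two_mul_add_mul_mul_eq_zero_of_square_zero_pair
    (ε₁ := (TrivSqZeroExt.inl DualNumber.eps : DualNumber (DualNumber F))) (ε₂ := DualNumber.eps)
    ?_ DualNumber.eps_mul_eps (fun h => ?_) h2 hd hjk
  · rw [← TrivSqZeroExt.inl_mul, DualNumber.eps_mul_eps, TrivSqZeroExt.inl_zero]
  · have := congrArg TrivSqZeroExt.snd h
    simp only [DualNumber.snd_mul, TrivSqZeroExt.fst_inl, TrivSqZeroExt.snd_inl,
      DualNumber.snd_eps, DualNumber.fst_eps, mul_one, mul_zero, add_zero,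
      TrivSqZeroExt.snd_zero] at this
    exact one_ne_zero (congrArg TrivSqZeroExt.snd this)

theorem span_setOf_sq_linearForm_eq_zero {T : Matrix (Fin n) (Fin n) F} (h : NTIso F T 0) :
    Submodule.span F {d | linearForm T d ^ 2 = 0} = ⊤ := by
  obtain ⟨e, he, he_symm⟩ := h
  have hrange : LinearMap.range (linearForm T) = Submodule.span F (Set.range (NTgen F T)) :=
    Fintype.range_linearCombination F _
  choose D hD using fun i => (hrange ▸ he_symm i : e.symm (NTgen F 0 i) ∈ LinearMap.range _)
  have hD_sq : ∀ i, linearForm T (D i) ^ 2 = 0 := fun i => by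
    rw [hD, ← map_pow, NTgen_zero_sq, map_zero]
  have hD_span : Submodule.span F (Set.range D) = ⊤ := by
    apply Submodule.map_injective_of_injective
      (linearIndependent_NTgen T).fintypeLinearCombination_injective
    rw [Submodule.map_top]
    change Submodule.map (linearForm T) _ = LinearMap.range (linearForm T)
    rw [Submodule.map_span, hrange, ← Set.range_comp]
    refine le_antisymm (Submodule.span_le.mpr ?_) (Submodule.span_le.mpr ?_)
    · rintro _ ⟨i, rfl⟩
      simpa [hD] using he_symm i
    · rintro _ ⟨k, rfl⟩
      have := Submodule.mem_map_of_mem (f := e.symm.toLinearMap) (he k)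
      rw [Submodule.map_span, ← Set.range_comp] at this
      simpa [Function.comp_def, hD] using this
  exact top_le_iff.mp (hD_span ▸ Submodule.span_mono (Set.range_subset_iff.mpr hD_sq))

theorem eq_smul_completeSquare_of_sq_linearForm_eq_zero (h2 : (2 : F) ≠ 0)
    {U : Matrix (Fin n) (Fin n) F} (hU : SLTM F U) {d : Fin n → F}
    (hd : linearForm U d ^ 2 = 0) {t : Fin n} (hdt : d t ≠ 0) (hlast : ∀ w, t < w → d w = 0) :
    d = d t • completeSquare U t := by
  ext w
  rcases lt_trichotomy w t with hw | rfl | hw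
  · have h := (mul_eq_zero.mp (two_mul_add_mul_mul_eq_zero h2 hd hw)).resolve_right hdt
    simp [completeSquare, hw.ne']
    field_simp
    linear_combination h
  · simp [completeSquare, hU w w le_rfl]
  · simp [completeSquare, Matrix.one_apply_ne hw.ne, hlast w hw, hU t w hw.le]

/-- The square-zero linear forms span, and each is a multiple of some row of `completeSquare U`
lying among them; counting dimensions, all `n` rows must occur. -/
theorem sq_linearForm_completeSquare_eq_zero (h2 : (2 : F) ≠ 0) {U : Matrix (Fin n) (Fin n) F}
    (hU : SLTM F U) (h : NTIso F U 0) (r : Fin n) :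
    linearForm U (completeSquare U r) ^ 2 = 0 := by
  classical
  set S := {d | linearForm U d ^ 2 = 0}
  have hS_smul : ∀ (c : F) d, d ∈ S → c • d ∈ S := fun c d (hd : linearForm U d ^ 2 = 0) =>
    show linearForm U (c • d) ^ 2 = 0 by rw [map_smul, smul_pow, hd, smul_zero]
  set s := Finset.univ.filter fun t => completeSquare U t ∈ S
  have hspan : Submodule.span F (completeSquare U '' s) = ⊤ := by
    refine top_le_iff.mp ((span_setOf_sq_linearForm_eq_zero h).symm.trans_le ?_)
    refine Submodule.span_le.mpr fun d hd => ?_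
    by_cases hd0 : d = 0
    · simp [hd0]
    obtain ⟨a, ha⟩ := Function.ne_iff.mp hd0
    obtain ⟨t, -, hdt, hlast⟩ := exists_last_ne_zero ha
    have hd_eq := eq_smul_completeSquare_of_sq_linearForm_eq_zero h2 hU hd hdt hlast
    have ht : t ∈ s := by
      have hPt : completeSquare U t = (d t)⁻¹ • d := by
        calc completeSquare U t = (d t)⁻¹ • (d t • completeSquare U t) := by
              rw [smul_smul, inv_mul_cancel₀ hdt, one_smul]
          _ = (d t)⁻¹ • d := by rw [← hd_eq]
      simpa [s, hPt] using hS_smul (d t)⁻¹ d hd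
    rw [hd_eq]
    exact Submodule.smul_mem _ _ (Submodule.subset_span ⟨t, ht, rfl⟩)
  have hs := Finset.eq_univ_of_span_image_eq_top (by simp) _ hspan
  have hr : r ∈ s := hs ▸ Finset.mem_univ r
  exact (Finset.mem_filter.mp hr).2

theorem halfRowCondition_of_sq_linearForm_completeSquare (h2 : (2 : F) ≠ 0)
    {U : Matrix (Fin n) (Fin n) F} (hU : SLTM F U)
    (hW : ∀ r, linearForm U (completeSquare U r) ^ 2 = 0) : HalfRowCondition U := by
  intro r c _ hrc i hic
  have hcr : c < r := lt_of_not_ge fun h => hrc (hU r c h)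
  have h := two_mul_add_mul_mul_eq_zero h2 (hW r) hic
  simp [completeSquare, hcr.ne', (hic.trans hcr).ne', h2, hrc] at h
  field_simp at h
  linear_combination -h

theorem sq_linSubst_completeSquare_NTgen (h2 : (2 : F) ≠ 0) {U : Matrix (Fin n) (Fin n) F}
    (hU : SLTM F U) (hcond : HalfRowCondition U) (i : Fin n) :
    linSubst (completeSquare U) (NTgen F U) i ^ 2 = 0 := by
  induction i using WellFoundedLT.induction with
  | _ i ih =>
    have hrel : NTgen F U i ^ 2 - linSubst U (NTgen F U) i * NTgen F U i = 0 := by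
      rw [sub_eq_zero, NTgen_sq, sum_filter_lt_eq_linSubst_mul hU]
    rwa [sq_sub_linSubst_mul_eq h2, smul_pow, sq_linSubst_eq_zero h2 hU hcond ih, smul_zero,
      sub_zero] at hrel

theorem ntIso_zero_of_halfRowCondition (h2 : (2 : F) ≠ 0) {U : Matrix (Fin n) (Fin n) F}
    (hU : SLTM F U) (hcond : HalfRowCondition U) : NTIso F U 0 := by
  set P := completeSquare U
  have hdet : IsUnit P.det := by rw [det_completeSquare hU]; exact isUnit_one
  set z := linSubst P⁻¹ (NTgen F 0)
  have hPz : linSubst P z = NTgen F 0 := by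
    rw [linSubst_linSubst, Matrix.mul_nonsing_inv P hdet, linSubst_one]
  let φ : NTAlg F 0 →ₐ[F] NTAlg F U := lift 0 (linSubst P (NTgen F U)) fun i => by
    simpa using sq_linSubst_completeSquare_NTgen h2 hU hcond i
  let ψ : NTAlg F U →ₐ[F] NTAlg F 0 := lift U z fun i => by
    rw [sum_filter_lt_eq_linSubst_mul hU, ← sub_eq_zero, sq_sub_linSubst_mul_eq h2, hPz,
      NTgen_zero_sq, smul_pow,
      sq_linSubst_eq_zero h2 hU hcond fun c _ => by rw [hPz, NTgen_zero_sq],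
      smul_zero, sub_zero]
  have hφ : ∀ i, φ (NTgen F 0 i) = linSubst P (NTgen F U) i := lift_NTgen _ _ _
  have hψ : ∀ i, ψ (NTgen F U i) = z i := lift_NTgen _ _ _
  have hψφ : ψ.comp φ = AlgHom.id F _ := algHom_ext fun i => by
    simp only [AlgHom.comp_apply, AlgHom.id_apply]
    rw [hφ, map_linSubst, Function.comp_def, funext hψ, hPz]
  have hφψ : φ.comp ψ = AlgHom.id F _ := algHom_ext fun i => by
    simp only [AlgHom.comp_apply, AlgHom.id_apply]
    rw [hψ, map_linSubst, Function.comp_def, funext hφ, linSubst_linSubst,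
      Matrix.nonsing_inv_mul P hdet, linSubst_one]
  refine ⟨AlgEquiv.ofAlgHom ψ φ hψφ hφψ, fun j => ?_, fun j => ?_⟩
  · rw [AlgEquiv.ofAlgHom_apply, hψ]
    exact linSubst_mem_span _ _ j
  · rw [AlgEquiv.ofAlgHom_symm, AlgEquiv.ofAlgHom_apply, hφ]
    exact linSubst_mem_span _ _ j

end NTAlg

end

theorem stmt18 {n : ℕ} (h2 : (2 : F) ≠ 0) (U : Matrix (Fin n) (Fin n) F)
    (hU : SLTM F U) :
    NTIso F U 0 ↔
      ((∀ r c : Fin n, IsLeader F U r c → (c : ℕ) = 0) ∨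
       (∀ r c : Fin n, 0 < (c : ℕ) → U r c ≠ 0 →
          ∀ i : Fin n, i < c → 2 * U r i + U r c * U c i = 0)) := by
  change NTIso F U 0 ↔ _ ∨ HalfRowCondition U
  rw [or_iff_right_of_imp halfRowCondition_of_forall_isLeader]
  exact ⟨fun h => NTAlg.halfRowCondition_of_sq_linearForm_completeSquare h2 hU
      (NTAlg.sq_linearForm_completeSquare_eq_zero h2 hU h),
    NTAlg.ntIso_zero_of_halfRowCondition h2 hU⟩
end
end
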